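/- Let u ∈ ℝ^N satisfy ‖u‖_∞ ≤ π/2 and let Δt > 0. Then the matrix I + Δt(D^{1/2} C D^{−1/2} + G(u)D⁻²) is invertible and its operator norm with respect to the Euclidean norm on ℝ^N satisfies ‖(I + Δt(D^{1/2} C D^{−1/2} + G(u)D⁻²))^{-1}‖_2 ≤ 1. -/

import Mathlib

open Real Matrix

noncomputable section

/-- Mesh size `h = 1/(N+1)`. -/
def hmesh (N : ℕ) : ℝ := 1 / (N + 1)

/-- Grid points `x_i = i·h`, `i = 1,…,N` (here `i : Fin N` corresponds to `i+1`). -/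
def gridx (N : ℕ) (i : Fin N) : ℝ := ((i : ℕ) + 1) * hmesh N

/-- `A = (1/h²)·tridiag(−1,2,−1)`. -/
def matA (N : ℕ) : Matrix (Fin N) (Fin N) ℝ := fun i j =>
  (1 / (hmesh N) ^ 2) *
    (if (i : ℕ) = (j : ℕ) then 2
     else if (i : ℕ) + 1 = (j : ℕ) ∨ (j : ℕ) + 1 = (i : ℕ) then -1 else 0)

/-- `B = (1/(2h))·tridiag(−1,0,1)`. -/
def matB (N : ℕ) : Matrix (Fin N) (Fin N) ℝ := fun i j =>
  (1 / (2 * hmesh N)) *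
    (if (i : ℕ) + 1 = (j : ℕ) then 1
     else if (j : ℕ) + 1 = (i : ℕ) then -1 else 0)

/-- `D = diag(x_1,…,x_N)`. -/
def matD (N : ℕ) : Matrix (Fin N) (Fin N) ℝ := Matrix.diagonal (gridx N)

/-- `D^β = diag(x_1^β,…,x_N^β)` (real powers). -/
def matDpow (N : ℕ) (β : ℝ) : Matrix (Fin N) (Fin N) ℝ :=
  Matrix.diagonal (fun i => gridx N i ^ β)

/-- `C = A − D⁻¹B`. -/
def matC (N : ℕ) : Matrix (Fin N) (Fin N) ℝ :=
  matA N - Matrix.diagonal (fun i => (gridx N i)⁻¹) * matB N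

/-- `g(y) = sin(2y)/(2y)` for `y ≠ 0`, `g(0) = 1`. -/
def gfun (y : ℝ) : ℝ := if y = 0 then 1 else Real.sin (2 * y) / (2 * y)

/-- `G(u) = diag(g(u_1),…,g(u_N))`. -/
def matG {N : ℕ} (u : Fin N → ℝ) : Matrix (Fin N) (Fin N) ℝ :=
  Matrix.diagonal (fun i => gfun (u i))

/-- The matrix `I + Δt(C + G(v)D⁻²)` of the semi-implicit Euler scheme. -/
def stepMat (N : ℕ) (Δt : ℝ) (v : Fin N → ℝ) : Matrix (Fin N) (Fin N) ℝ :=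
  1 + Δt • (matC N + matG v * matDpow N (-2))

/-- Operator norm of a matrix induced by the maximum norm on `ℝ^N`
(the Pi norm on `Fin N → ℝ` is the sup norm). -/
def opNormInf {N : ℕ} (M : Matrix (Fin N) (Fin N) ℝ) : ℝ :=
  ‖(LinearMap.toContinuousLinearMap (Matrix.mulVecLin M) :
      (Fin N → ℝ) →L[ℝ] (Fin N → ℝ))‖

end

/-- Operator norm of a matrix induced by the Euclidean norm on `ℝ^N`. -/
noncomputable def opNorm2 {N : ℕ} (M : Matrix (Fin N) (Fin N) ℝ) : ℝ :=
  ‖(LinearMap.toContinuousLinearMap (Matrix.toEuclideanLin M) :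
      EuclideanSpace ℝ (Fin N) →L[ℝ] EuclideanSpace ℝ (Fin N))‖

/-!
Write `K = D^{1/2} C D^{-1/2} + G(u) D⁻²`. Since `D^{1/2} = D^{-1/2} D`, the first summand is
`D^{-1/2} (D C) D^{-1/2}`, and `D C` is the flux-form discretisation of `-(x u')'`: a symmetric
matrix with nonpositive off-diagonal entries and nonnegative row sums, hence positive
semidefinite. On `[-π/2, π/2]` the function `g` is nonnegative, so `G(u) D⁻²` is a nonnegative
diagonal matrix. Thus `vᵀ K v ≥ 0`, and then `‖w‖² ≤ ⟪w, (I + Δt K) w⟫ ≤ ‖w‖ ‖(I + Δt K) w‖`,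
which gives both the invertibility of `I + Δt K` and the bound on its inverse.
-/

theorem Finset.sum_ite_apply_eq_le_of_injective {ι α : Type*} [Fintype ι] [DecidableEq α] {f : ι → α}
    (hf : Function.Injective f) (a : α) {c : ℝ} (hc : 0 ≤ c) :
    ∑ j, (if f j = a then c else 0) ≤ c := by
  rw [Finset.sum_ite, Finset.sum_const_zero, add_zero, Finset.sum_const, nsmul_eq_mul]
  have hcard : (Finset.univ.filter fun j => f j = a).card ≤ 1 :=
    Finset.card_le_one.mpr fun i hi j hj =>
      hf ((Finset.mem_filter.1 hi).2.trans (Finset.mem_filter.1 hj).2.symm)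
  exact mul_le_of_le_one_left hc (by exact_mod_cast hcard)

namespace Matrix

variable {n : Type*} [Fintype n]

theorem posSemidef_of_isSymm_of_nonpos_of_sum_nonneg {S : Matrix n n ℝ} (hS : S.IsSymm)
    (hoff : ∀ i j, i ≠ j → S i j ≤ 0) (hrow : ∀ i, 0 ≤ ∑ j, S i j) : S.PosSemidef := by
  refine PosSemidef.of_dotProduct_mulVec_nonneg hS fun v => ?_
  have hsym : ∑ i, ∑ j, S i j * v j ^ 2 = ∑ i, (∑ j, S i j) * v i ^ 2 := by
    rw [Finset.sum_comm]
    simp_rw [Finset.sum_mul]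
    exact Finset.sum_congr rfl fun i _ => Finset.sum_congr rfl fun j _ => by rw [hS.apply i j]
  have hquad : star v ⬝ᵥ S *ᵥ v
      = ∑ i, (∑ j, S i j) * v i ^ 2 - (∑ i, ∑ j, S i j * (v i - v j) ^ 2) / 2 := by
    have hexpand : ∀ i j, S i j * (v i - v j) ^ 2
        = S i j * v i ^ 2 + S i j * v j ^ 2 - 2 * (v i * (S i j * v j)) := fun i j => by ring
    simp only [star_trivial, dotProduct, mulVec, hexpand, Finset.sum_add_distrib,
      Finset.sum_sub_distrib, ← Finset.mul_sum, ← Finset.sum_mul, hsym]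
    ring
  have hedges : ∑ i, ∑ j, S i j * (v i - v j) ^ 2 ≤ 0 := by
    refine Finset.sum_nonpos fun i _ => Finset.sum_nonpos fun j _ => ?_
    rcases eq_or_ne i j with rfl | hij
    · simp
    · exact mul_nonpos_of_nonpos_of_nonneg (hoff i j hij) (sq_nonneg _)
  have hdiag : 0 ≤ ∑ i, (∑ j, S i j) * v i ^ 2 :=
    Finset.sum_nonneg fun i _ => mul_nonneg (hrow i) (sq_nonneg _)
  rw [hquad]
  linarith

variable [DecidableEq n]

theorem norm_le_norm_toEuclideanCLM_of_dotProduct_le {M : Matrix n n ℝ}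
    (hM : ∀ v, v ⬝ᵥ v ≤ v ⬝ᵥ M *ᵥ v) (x : EuclideanSpace ℝ n) :
    ‖x‖ ≤ ‖toEuclideanCLM (𝕜 := ℝ) M x‖ := by
  have hanti := ContinuousLinearMap.antilipschitz_of_forall_le_inner_map
    (toEuclideanCLM (𝕜 := ℝ) M) one_pos fun y => by
      rw [NNReal.coe_one, mul_one, ← real_inner_self_eq_norm_sq,
        real_inner_comm y (toEuclideanCLM (𝕜 := ℝ) M y), inner_toEuclideanCLM,
        EuclideanSpace.inner_eq_star_dotProduct, star_trivial]
      exact (hM y).trans (le_abs_self _)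
  simpa using (toEuclideanCLM (𝕜 := ℝ) M).bound_of_antilipschitz hanti x

theorem isUnit_of_dotProduct_le {M : Matrix n n ℝ} (hM : ∀ v, v ⬝ᵥ v ≤ v ⬝ᵥ M *ᵥ v) :
    IsUnit M := by
  refine mulVec_injective_iff_isUnit.mp fun v w hvw => ?_
  have := norm_le_norm_toEuclideanCLM_of_dotProduct_le hM (WithLp.toLp 2 (v - w))
  rw [toEuclideanCLM_toLp, mulVec_sub, hvw, sub_self] at this
  simpa [sub_eq_zero] using this

theorem norm_toEuclideanCLM_inv_le_one_of_dotProduct_le {M : Matrix n n ℝ}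
    (hM : ∀ v, v ⬝ᵥ v ≤ v ⬝ᵥ M *ᵥ v) : ‖toEuclideanCLM (𝕜 := ℝ) M⁻¹‖ ≤ 1 := by
  refine ContinuousLinearMap.opNorm_le_bound _ zero_le_one fun y => ?_
  have := norm_le_norm_toEuclideanCLM_of_dotProduct_le hM (toEuclideanCLM (𝕜 := ℝ) M⁻¹ y)
  have hdet := (isUnit_iff_isUnit_det M).mp (isUnit_of_dotProduct_le hM)
  simpa [← ContinuousLinearMap.comp_apply, ← ContinuousLinearMap.mul_def, ← map_mul,
    mul_nonsing_inv _ hdet] using this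

theorem dotProduct_self_le_dotProduct_one_add_smul_mulVec {K : Matrix n n ℝ}
    (hK : ∀ v, 0 ≤ v ⬝ᵥ K *ᵥ v) {t : ℝ} (ht : 0 ≤ t) (v : n → ℝ) :
    v ⬝ᵥ v ≤ v ⬝ᵥ (1 + t • K) *ᵥ v := by
  rw [add_mulVec, one_mulVec, smul_mulVec, dotProduct_add, dotProduct_smul, smul_eq_mul]
  exact le_add_of_nonneg_right (mul_nonneg ht (hK v))

end Matrix

lemma hmesh_pos (N : ℕ) : 0 < hmesh N := by
  unfold hmesh; positivity

lemma gridx_pos {N : ℕ} (i : Fin N) : 0 < gridx N i :=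
  mul_pos (by positivity) (hmesh_pos N)

lemma gridx_eq_add_hmesh {N : ℕ} {i j : Fin N} (h : (j : ℕ) = i + 1) :
    gridx N j = gridx N i + hmesh N := by
  simp only [gridx, h]; push_cast; ring

/-- Flux-form discretisation of `-(x u')'`, with the midpoint values `(x_i + x_j) / 2` as
weights. -/
noncomputable def fluxMat (N : ℕ) : Matrix (Fin N) (Fin N) ℝ := fun i j =>
  (1 / hmesh N ^ 2) *
    (if (i : ℕ) = (j : ℕ) then 2 * gridx N i
     else if (i : ℕ) + 1 = (j : ℕ) ∨ (j : ℕ) + 1 = (i : ℕ) then -((gridx N i + gridx N j) / 2)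
     else 0)

lemma matD_mul_matC (N : ℕ) : matD N * matC N = fluxMat N := by
  ext i j
  have hx : gridx N i ≠ 0 := (gridx_pos i).ne'
  simp only [matD, matC, diagonal_mul, Matrix.sub_apply, mul_sub, mul_inv_cancel_left₀ hx]
  simp only [matA, matB, fluxMat]
  split_ifs with h_eq _ _ _ h_succ h_pred <;> try omega
  · rw [Fin.ext h_eq]; field_simp; ring
  · rw [gridx_eq_add_hmesh h_succ.symm]; field_simp; ring
  · rw [gridx_eq_add_hmesh h_pred.symm]; field_simp; ring
  · simp

lemma fluxMat_isSymm (N : ℕ) : (fluxMat N).IsSymm := by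
  ext i j
  rcases eq_or_ne i j with rfl | hij
  · rfl
  have hij' : (i : ℕ) ≠ j := Fin.val_ne_of_ne hij
  simp only [transpose_apply, fluxMat, if_neg hij', if_neg hij'.symm, or_comm, add_comm]

lemma fluxMat_nonpos {N : ℕ} {i j : Fin N} (hij : i ≠ j) : fluxMat N i j ≤ 0 := by
  have := gridx_pos i
  have := gridx_pos j
  simp only [fluxMat, if_neg (Fin.val_ne_of_ne hij)]
  split_ifs
  · exact mul_nonpos_of_nonneg_of_nonpos (by positivity) (by linarith)
  · simp

lemma sum_fluxMat_nonneg {N : ℕ} (i : Fin N) : 0 ≤ ∑ j, fluxMat N i j := by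
  have hh := hmesh_pos N
  have hxpos := gridx_pos i
  have hx : hmesh N ≤ gridx N i := le_mul_of_one_le_left hh.le (by simp)
  have hlow : ∀ j : Fin N, (if j = i then 2 * gridx N i else 0)
      - (if (j : ℕ) = i + 1 then gridx N i + hmesh N / 2 else 0)
      - (if (j : ℕ) + 1 = i then gridx N i - hmesh N / 2 else 0)
      ≤ hmesh N ^ 2 * fluxMat N i j := by
    intro j
    rw [fluxMat, ← mul_assoc, mul_one_div_cancel (by positivity), one_mul]
    simp only [Fin.ext_iff]
    split_ifs <;> try omega
    · simp
    · linarith [gridx_eq_add_hmesh ‹(j : ℕ) = i + 1›]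
    · linarith [gridx_eq_add_hmesh ‹(j : ℕ) + 1 = i›.symm]
    · simp
  have hsucc := Finset.sum_ite_apply_eq_le_of_injective (Fin.val_injective (n := N)) (i + 1 : ℕ)
    (c := gridx N i + hmesh N / 2) (by positivity)
  have hsub := Finset.sum_ite_apply_eq_le_of_injective (f := fun j : Fin N => (j : ℕ) + 1)
    (fun a b h => Fin.val_injective (Nat.succ_injective h)) i
    (c := gridx N i - hmesh N / 2) (by linarith)
  have hsum := Finset.sum_le_sum fun j (_ : j ∈ Finset.univ) => hlow j
  rw [Finset.sum_sub_distrib, Finset.sum_sub_distrib, Finset.sum_ite_eq',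
    if_pos (Finset.mem_univ _), ← Finset.mul_sum] at hsum
  exact (mul_nonneg_iff_of_pos_left (pow_pos hh 2)).mp (by linarith)

lemma matDpow_one_half (N : ℕ) : matDpow N (1 / 2) = matDpow N (-(1 / 2)) * matD N := by
  rw [matDpow, matDpow, matD, diagonal_mul_diagonal]
  congr 1
  funext i
  rw [← Real.rpow_add_one (gridx_pos i).ne']
  norm_num

lemma posSemidef_matDpow_mul_matC_mul_matDpow (N : ℕ) :
    (matDpow N (1 / 2) * matC N * matDpow N (-(1 / 2))).PosSemidef := by
  have hS : (fluxMat N).PosSemidef :=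
    posSemidef_of_isSymm_of_nonpos_of_sum_nonneg (fluxMat_isSymm N) (fun _ _ => fluxMat_nonpos)
      sum_fluxMat_nonneg
  rw [matDpow_one_half, Matrix.mul_assoc _ (matD N), matD_mul_matC]
  simpa [matDpow] using hS.mul_mul_conjTranspose_same (matDpow N (-(1 / 2)))

lemma gfun_nonneg {y : ℝ} (hy : |y| ≤ π / 2) : 0 ≤ gfun y := by
  obtain ⟨hlo, hhi⟩ := abs_le.mp hy
  unfold gfun
  split_ifs
  · exact zero_le_one
  rcases le_total 0 y with hy0 | hy0
  · exact div_nonneg (sin_nonneg_of_nonneg_of_le_pi (by linarith) (by linarith)) (by linarith)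
  · exact div_nonneg_of_nonpos (sin_nonpos_of_nonpos_of_neg_pi_le (by linarith) (by linarith))
      (by linarith)

lemma posSemidef_matG_mul_matDpow {N : ℕ} {u : Fin N → ℝ} (hu : ∀ i, |u i| ≤ π / 2) (β : ℝ) :
    (matG u * matDpow N β).PosSemidef := by
  rw [matG, matDpow, diagonal_mul_diagonal]
  exact PosSemidef.diagonal fun i => mul_nonneg (gfun_nonneg (hu i))
    (Real.rpow_nonneg (gridx_pos i).le β)

theorem stmt9_general {N : ℕ} (u : Fin N → ℝ) (hu : ‖u‖ ≤ π / 2)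
    (Δt : ℝ) (hΔt : 0 < Δt) :
    IsUnit (1 + Δt • (matDpow N (1 / 2) * matC N * matDpow N (-(1 / 2)) + matG u * matDpow N (-2))) ∧
      opNorm2 (1 + Δt • (matDpow N (1 / 2) * matC N * matDpow N (-(1 / 2)) + matG u * matDpow N (-2)))⁻¹ ≤ 1 := by
  have hu' : ∀ i, |u i| ≤ π / 2 := fun i => (norm_le_pi_norm u i).trans hu
  have hK := (posSemidef_matDpow_mul_matC_mul_matDpow N).add (posSemidef_matG_mul_matDpow hu' (-2))
  have hM := dotProduct_self_le_dotProduct_one_add_smul_mulVec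
    (fun v => by simpa only [star_trivial] using hK.dotProduct_mulVec_nonneg v) hΔt.le
  exact ⟨isUnit_of_dotProduct_le hM, norm_toEuclideanCLM_inv_le_one_of_dotProduct_le hM⟩

/-- For `‖u‖_∞ ≤ π/2` and `Δt > 0`, the matrix `I + Δt(D^{1/2} C D^{−1/2} + G(u)D⁻²)`
is invertible and the Euclidean operator norm of its inverse is at most 1. -/
theorem stmt9 {N : ℕ} (hN : 1 ≤ N) (u : Fin N → ℝ) (hu : ‖u‖ ≤ π / 2)
    (Δt : ℝ) (hΔt : 0 < Δt) :
    IsUnit (1 + Δt • (matDpow N (1 / 2) * matC N * matDpow N (-(1 / 2)) + matG u * matDpow N (-2))) ∧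
      opNorm2 (1 + Δt • (matDpow N (1 / 2) * matC N * matDpow N (-(1 / 2)) + matG u * matDpow N (-2)))⁻¹ ≤ 1 :=
  stmt9_general u hu Δt hΔt
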